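/- Let v_ε solve dv_ε = εΔv_ε dt - ε(v_ε + Z_ε)³ dt with v_ε(0) = 0 on 𝕋, where Z_ε ∈ C([0,T]; L^∞). Then for every p ≥ 1 and a ∈ (0,1) there is C = C(p,a) such that for all t ∈ [0,T]: (1/2p)‖v_ε(t)‖_{L^{2p}}^{2p} + ε(1-a) ∫₀ᵗ ‖v_ε(s)‖_{L^{2p+2}}^{2p+2} ds ≤ ε C ∫₀ᵗ ‖Z_ε(s)‖_{L^∞}^{2p+2} ds. -/

import Mathlib

/-!
Instead of differentiating `∫ v(t)^{2p}` in time, which would need more regularity of `∂ₜv`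
than the pointwise equation provides, run the energy argument on `M(t) = sup_x |v(t,x)|`.
At a point `x₀` where `|v(t,·)|` is maximal, `v^{2p-1} ∂ₓ²v ≤ 0`, and Young's inequality gives
`-u^{2p-1}(u+z)³ ≤ -(1-a) u^{2p+2} + C |z|^{2p+2}`. Hence the left Dini derivative of
`M^{2p}/2p + ε(1-a)∫ M^{2p+2} - εC ∫ ‖Z‖_∞^{2p+2}` is nonpositive, so this quantity stays below
its initial value `0`. Integrating over the torus of length `2` costs a factor `2` in `C`.
-/

open MeasureTheory Set Filter Topology Function

theorem IsLocalMax.deriv_deriv_nonpos {f : ℝ → ℝ} {x₀ : ℝ} (h : IsLocalMax f x₀)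
    (hc : ContinuousAt f x₀) : deriv (deriv f) x₀ ≤ 0 := by
  by_contra! hpos
  have hconst : f =ᶠ[𝓝 x₀] fun _ => f x₀ :=
    ((isLocalMin_of_deriv_deriv_pos hpos h.deriv_eq_zero hc).and h).mono
      fun x hx => le_antisymm hx.2 hx.1
  have := hconst.deriv.deriv_eq
  simp only [deriv_const'] at this
  linarith

theorem pow_mul_iteratedDeriv_two_nonpos_of_abs_le {f : ℝ → ℝ} {x₀ : ℝ} {k : ℕ} (hk : Odd k)
    (hc : ContinuousAt f x₀) (hmax : ∀ x, |f x| ≤ |f x₀|) :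
    f x₀ ^ k * iteratedDeriv 2 f x₀ ≤ 0 := by
  rw [iteratedDeriv_succ, iteratedDeriv_one]
  rcases le_or_gt 0 (f x₀) with h0 | h0
  · have hmax' : IsLocalMax f x₀ := Eventually.of_forall fun x =>
      (le_abs_self _).trans ((hmax x).trans (abs_of_nonneg h0).le)
    exact mul_nonpos_of_nonneg_of_nonpos (pow_nonneg h0 k) (hmax'.deriv_deriv_nonpos hc)
  · have hmax' : IsLocalMax (-f) x₀ := Eventually.of_forall fun x =>
      (neg_le_abs _).trans ((hmax x).trans (abs_of_neg h0).le)
    have := hmax'.deriv_deriv_nonpos hc.neg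
    simp only [deriv.neg'] at this
    exact mul_nonpos_of_nonpos_of_nonneg (hk.pow_nonpos h0.le) (by simpa using this)

theorem HasDerivWithinAt.eventually_nhdsLT_sub_le {H : ℝ → ℝ} {d δ τ : ℝ}
    (hH : HasDerivWithinAt H d (Iio τ) τ) (hd : d < δ) :
    ∀ᶠ s in 𝓝[<] τ, H τ - H s ≤ δ * (τ - s) := by
  have hslope := (hasDerivWithinAt_iff_tendsto_slope' self_notMem_Iio).1 hH
  filter_upwards [hslope.eventually (eventually_lt_nhds hd), self_mem_nhdsWithin]
    with s hs hsτ
  rw [slope_def_field, div_lt_iff_of_neg (sub_neg.2 hsτ)] at hs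
  linarith

theorem le_of_forall_eventually_nhdsLT_sub_le {G : ℝ → ℝ} {a b : ℝ} (hab : a ≤ b)
    (hG : ContinuousOn G (Icc a b))
    (h : ∀ τ ∈ Ioc a b, ∀ δ > 0, ∀ᶠ s in 𝓝[<] τ, G τ - G s ≤ δ * (τ - s)) :
    G b ≤ G a := by
  have hperturbed : ∀ δ > 0, G b ≤ G a + δ * (b - a) := by
    intro δ hδ
    have hGδ : ContinuousOn (fun s => G s - δ * s) (Icc a b) :=
      hG.sub (continuous_const_mul δ).continuousOn
    obtain ⟨τ, hτ, hmax⟩ := isCompact_Icc.exists_isMaxOn (nonempty_Icc.2 hab) hGδ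
    rcases hτ.1.eq_or_lt with rfl | hlt
    · have : G b - δ * b ≤ G a - δ * a := hmax (right_mem_Icc.2 hab)
      linarith
    · -- at a maximum `τ > a` of `G - δ id` the left slopes of `G` are at least `δ > δ / 2`
      obtain ⟨s, hs, hsτ⟩ := ((h τ ⟨hlt, hτ.2⟩ (δ / 2) (by positivity)).and
        (Ioo_mem_nhdsLT hlt)).exists
      have : G s - δ * s ≤ G τ - δ * τ := hmax ⟨hsτ.1.le, hsτ.2.le.trans hτ.2⟩
      nlinarith [hsτ.2]
  refine le_of_forall_pos_le_add fun η hη => ?_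
  calc G b ≤ G a + η / (b - a + 1) * (b - a) := hperturbed _ (by positivity)
    _ ≤ G a + η := by
      gcongr
      rw [div_mul_eq_mul_div, div_le_iff₀ (by positivity)]
      nlinarith

theorem exists_cube_absorption {a : ℝ} (ha₀ : 0 < a) (ha₁ : a ≤ 1) {p : ℕ} (hp : 1 ≤ p) :
    ∃ C > 0, ∀ u z n : ℝ, |z| ≤ n →
      (1 - a) * u ^ (2 * p + 2) - C * n ^ (2 * p + 2) ≤ u ^ (2 * p - 1) * (u + z) ^ 3 := by
  set R := 3 / a
  have hR : 0 < R := by positivity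
  refine ⟨R ^ (2 * p - 1) * (R + 1) ^ 3 + R ^ (2 * p + 2), by positivity, fun u z n hzn => ?_⟩
  have hn : 0 ≤ n := (abs_nonneg z).trans hzn
  have hpow : 0 ≤ u ^ (2 * p + 2) := Even.pow_nonneg ⟨p + 1, by ring⟩ u
  rcases le_or_gt |u| (R * n) with hsmall | hlarge
  · -- for `|u| ≤ R n` every term is of size `n ^ (2p+2)`
    have hcube : |u ^ (2 * p - 1) * (u + z) ^ 3|
        ≤ R ^ (2 * p - 1) * (R + 1) ^ 3 * n ^ (2 * p + 2) := by
      rw [abs_mul, abs_pow, abs_pow]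
      calc |u| ^ (2 * p - 1) * |u + z| ^ 3 ≤ (R * n) ^ (2 * p - 1) * ((R + 1) * n) ^ 3 := by
            gcongr
            linarith [abs_add_le u z]
        _ = R ^ (2 * p - 1) * (R + 1) ^ 3 * n ^ (2 * p + 2) := by
            rw [mul_pow, mul_pow, show 2 * p + 2 = (2 * p - 1) + 3 by omega, pow_add]; ring
    have hlead : u ^ (2 * p + 2) ≤ R ^ (2 * p + 2) * n ^ (2 * p + 2) := by
      rw [← mul_pow, ← Even.pow_abs ⟨p + 1, by ring⟩ u]
      exact pow_le_pow_left₀ (abs_nonneg u) hsmall _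
    nlinarith [neg_abs_le (u ^ (2 * p - 1) * (u + z) ^ 3)]
  · -- for `|u| > R n` the shift `z` is at most the fraction `a / 3` of `u`
    have hun : |u| * n ≤ a / 3 * u ^ 2 := by
      have : n ≤ a / 3 * |u| := by
        rw [div_mul_eq_mul_div, le_div_iff₀ (by norm_num)]
        rw [div_mul_eq_mul_div, div_lt_iff₀ ha₀] at hlarge
        linarith
      calc |u| * n ≤ |u| * (a / 3 * |u|) := by gcongr
        _ = a / 3 * u ^ 2 := by rw [← sq_abs u]; ring
    have huz : -(|u| * n) ≤ u * z := by
      have := neg_abs_le (u * z)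
      rw [abs_mul] at this
      nlinarith [abs_nonneg u]
    have hA : (1 - a / 3) * u ^ 2 ≤ u * (u + z) := by nlinarith
    have hB : (1 - 2 * a / 3) * u ^ 2 ≤ (u + z) ^ 2 := by nlinarith [sq_nonneg z]
    have hA₀ : 0 ≤ (1 - a / 3) * u ^ 2 := mul_nonneg (by linarith) (sq_nonneg u)
    have hB₀ : 0 ≤ (1 - 2 * a / 3) * u ^ 2 := mul_nonneg (by linarith) (sq_nonneg u)
    have hP : 0 ≤ (u ^ 2) ^ (p - 1) := by positivity
    have hsplit : u ^ (2 * p - 1) * (u + z) ^ 3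
        = (u ^ 2) ^ (p - 1) * (u * (u + z)) * (u + z) ^ 2 := by
      rw [← pow_mul, show 2 * p - 1 = 2 * (p - 1) + 1 by omega]; ring
    have heven : u ^ (2 * p + 2) = (u ^ 2) ^ (p - 1) * u ^ 2 * u ^ 2 := by
      rw [← pow_mul, ← pow_add, ← pow_add]; congr 1; omega
    calc (1 - a) * u ^ (2 * p + 2) - _ ≤ (1 - a) * u ^ (2 * p + 2) := by
          have : 0 ≤ (R ^ (2 * p - 1) * (R + 1) ^ 3 + R ^ (2 * p + 2)) * n ^ (2 * p + 2) := by
            positivity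
          linarith
      _ ≤ (u ^ 2) ^ (p - 1) * ((1 - a / 3) * u ^ 2) * ((1 - 2 * a / 3) * u ^ 2) := by
          have hQ : 0 ≤ (u ^ 2) ^ (p - 1) * u ^ 2 * u ^ 2 := by positivity
          rw [heven, show (u ^ 2) ^ (p - 1) * ((1 - a / 3) * u ^ 2) * ((1 - 2 * a / 3) * u ^ 2)
            = (1 - a + 2 * a ^ 2 / 9) * ((u ^ 2) ^ (p - 1) * u ^ 2 * u ^ 2) by ring]
          nlinarith [mul_nonneg (sq_nonneg a) hQ]
      _ ≤ u ^ (2 * p - 1) * (u + z) ^ 3 := by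
          rw [hsplit]
          exact mul_le_mul (mul_le_mul_of_nonneg_left hA hP) hB hB₀ (mul_nonneg hP (hA₀.trans hA))

noncomputable def supNorm (f : ℝ → ℝ) : ℝ := sSup (range fun x => |f x|)

section Periodic

variable {f : ℝ → ℝ} {c : ℝ}

theorem Function.Periodic.isCompact_range_abs (hf : Periodic f c) (hc : c ≠ 0)
    (hcont : Continuous f) : IsCompact (range fun x => |f x|) :=
  (hf.comp abs).compact_of_continuous hc hcont.abs

theorem Function.Periodic.abs_le_supNorm (hf : Periodic f c) (hc : c ≠ 0)
    (hcont : Continuous f) (x : ℝ) : |f x| ≤ supNorm f :=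
  le_csSup (hf.isCompact_range_abs hc hcont).bddAbove (mem_range_self x)

theorem Function.Periodic.exists_abs_eq_supNorm (hf : Periodic f c) (hc : c ≠ 0)
    (hcont : Continuous f) : ∃ x, |f x| = supNorm f :=
  (hf.isCompact_range_abs hc hcont).sSup_mem (range_nonempty _)

theorem continuous_supNorm {F : ℝ → ℝ → ℝ} (hc : c ≠ 0) (hF : Continuous ↿F)
    (hper : ∀ s, Periodic (F s) c) : Continuous fun s => supNorm (F s) := by
  have hrange : ∀ s, (range fun x => |F s x|) = (fun x => |F s x|) '' uIcc 0 (0 + c) :=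
    fun s => (((hper s).comp abs).image_uIcc hc 0).symm
  simp only [supNorm, hrange]
  exact isCompact_uIcc.continuous_sSup (f := fun s x => |F s x|) hF.abs

end Periodic

theorem intervalIntegral_pow_le {f : ℝ → ℝ} {a b m : ℝ} (hab : a ≤ b)
    (hf : ∀ x, |f x| ≤ m) (n : ℕ) : ∫ x in a..b, f x ^ n ≤ (b - a) * m ^ n := by
  calc ∫ x in a..b, f x ^ n ≤ ‖∫ x in a..b, f x ^ n‖ := Real.le_norm_self _
    _ ≤ m ^ n * |b - a| := intervalIntegral.norm_integral_le_of_norm_le_const fun x _ => by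
        rw [norm_pow, Real.norm_eq_abs]; exact pow_le_pow_left₀ (abs_nonneg _) (hf x) n
    _ = (b - a) * m ^ n := by rw [abs_of_nonneg (sub_nonneg.2 hab), mul_comm]

section ShiftedEquation

variable {p : ℕ} {a C ε T c : ℝ} {v Z : ℝ → ℝ → ℝ}

theorem supNorm_energy_le (hp : 1 ≤ p) (hε : 0 ≤ ε)
    (habs : ∀ u z n : ℝ, |z| ≤ n →
      (1 - a) * u ^ (2 * p + 2) - C * n ^ (2 * p + 2) ≤ u ^ (2 * p - 1) * (u + z) ^ 3)
    (hc : c ≠ 0) (hv : Continuous ↿v) (hZ : Continuous ↿Z)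
    (hvper : ∀ t, Periodic (v t) c) (hZper : ∀ t, Periodic (Z t) c) (hv0 : ∀ x, v 0 x = 0)
    (hpde : ∀ t ∈ Icc 0 T, ∀ x, HasDerivAt (fun τ => v τ x)
      (ε * iteratedDeriv 2 (v t) x - ε * (v t x + Z t x) ^ 3) t)
    {t : ℝ} (ht : t ∈ Icc 0 T) :
    1 / (2 * (p : ℝ)) * supNorm (v t) ^ (2 * p)
        + ε * (1 - a) * ∫ s in (0 : ℝ)..t, supNorm (v s) ^ (2 * p + 2)
      ≤ ε * C * ∫ s in (0 : ℝ)..t, supNorm (Z s) ^ (2 * p + 2) := by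
  have hvs : ∀ s, Continuous (v s) := fun s => hv.comp (Continuous.prodMk_right s)
  have hZs : ∀ s, Continuous (Z s) := fun s => hZ.comp (Continuous.prodMk_right s)
  have hM : Continuous fun s => supNorm (v s) := continuous_supNorm hc hv hvper
  have hN : Continuous fun s => supNorm (Z s) := continuous_supNorm hc hZ hZper
  set I : ℝ → ℝ := fun τ => ε * (1 - a) * (∫ s in (0 : ℝ)..τ, supNorm (v s) ^ (2 * p + 2))
    - ε * C * ∫ s in (0 : ℝ)..τ, supNorm (Z s) ^ (2 * p + 2)
  have hI : ∀ τ, HasDerivAt I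
      (ε * (1 - a) * supNorm (v τ) ^ (2 * p + 2) - ε * C * supNorm (Z τ) ^ (2 * p + 2)) τ :=
    fun τ => (((hM.pow _).integral_hasStrictDerivAt 0 τ).hasDerivAt.const_mul _).sub
      (((hN.pow _).integral_hasStrictDerivAt 0 τ).hasDerivAt.const_mul _)
  set G : ℝ → ℝ := fun τ => 1 / (2 * (p : ℝ)) * supNorm (v τ) ^ (2 * p) + I τ
  have hG0 : G 0 = 0 := by
    simp [G, I, supNorm, hv0, show 2 * p ≠ 0 by omega]
  suffices G t ≤ G 0 by simp only [hG0, G, I] at this; linarith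
  have hIc : Continuous I := continuous_iff_continuousAt.2 fun τ => (hI τ).continuousAt
  refine le_of_forall_eventually_nhdsLT_sub_le ht.1
    (((hM.pow _).const_mul _).add hIc).continuousOn fun τ hτ δ hδ => ?_
  have hτT : τ ∈ Icc 0 T := ⟨hτ.1.le, hτ.2.trans ht.2⟩
  obtain ⟨x₀, hx₀⟩ := (hvper τ).exists_abs_eq_supNorm hc (hvs τ)
  set u := v τ x₀
  have hEven : ∀ k, Even k → supNorm (v τ) ^ k = u ^ k := fun k hk => by
    rw [← hx₀, hk.pow_abs]
  -- `s ↦ v s x₀ ^ (2p) / 2p + I s` touches `G` from below at `τ`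
  set H : ℝ → ℝ := fun s => 1 / (2 * (p : ℝ)) * v s x₀ ^ (2 * p) + I s
  have hbarrier : ∀ s, G τ - G s ≤ H τ - H s := fun s => by
    have : v s x₀ ^ (2 * p) ≤ supNorm (v s) ^ (2 * p) := by
      rw [← (even_two_mul p).pow_abs]
      exact pow_le_pow_left₀ (abs_nonneg _) ((hvper s).abs_le_supNorm hc (hvs s) x₀) _
    simp only [G, H, hEven _ (even_two_mul p)]
    have : 0 ≤ 1 / (2 * (p : ℝ)) := by positivity
    nlinarith
  have hH : HasDerivAt H (u ^ (2 * p - 1) * (ε * iteratedDeriv 2 (v τ) x₀ - ε * (u + Z τ x₀) ^ 3)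
      + (ε * (1 - a) * supNorm (v τ) ^ (2 * p + 2) - ε * C * supNorm (Z τ) ^ (2 * p + 2))) τ := by
    refine (((hpde τ hτT x₀).pow (2 * p)).const_mul (1 / (2 * (p : ℝ)))).add (hI τ)
      |>.congr_deriv ?_
    have : (p : ℝ) ≠ 0 := by positivity
    push_cast
    field_simp
    rfl
  have hd : u ^ (2 * p - 1) * (ε * iteratedDeriv 2 (v τ) x₀ - ε * (u + Z τ x₀) ^ 3)
      + (ε * (1 - a) * supNorm (v τ) ^ (2 * p + 2) - ε * C * supNorm (Z τ) ^ (2 * p + 2)) ≤ 0 := by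
    have hdiff : u ^ (2 * p - 1) * iteratedDeriv 2 (v τ) x₀ ≤ 0 :=
      pow_mul_iteratedDeriv_two_nonpos_of_abs_le ⟨p - 1, by omega⟩ (hvs τ).continuousAt fun x => by
        rw [hx₀]; exact (hvper τ).abs_le_supNorm hc (hvs τ) x
    have hreact := habs u (Z τ x₀) (supNorm (Z τ))
      ((hZper τ).abs_le_supNorm hc (hZs τ) x₀)
    rw [hEven _ ⟨p + 1, by ring⟩]
    nlinarith [mul_nonneg hε (sub_nonneg.2 hreact), mul_nonneg hε (neg_nonneg.2 hdiff)]
  filter_upwards [hH.hasDerivWithinAt.eventually_nhdsLT_sub_le (hd.trans_lt hδ)] with s hs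
  linarith [hbarrier s]

end ShiftedEquation

/-- `L^{2p}` energy estimate for the shifted `Φ⁴₁` equation
`dv = εΔv dt - ε(v+Z)³ dt`, `v(0) = 0`, on the torus (period 2): for all `t ∈ [0,T]`,
`(1/2p)‖v(t)‖_{L^{2p}}^{2p} + ε(1-a)∫₀ᵗ ‖v(s)‖_{L^{2p+2}}^{2p+2} ds
  ≤ εC ∫₀ᵗ ‖Z(s)‖_{L^∞}^{2p+2} ds` with `C = C(p,a)`. -/
theorem shifted_equation_energy_estimate
    (p : ℕ) (hp : 1 ≤ p) (a : ℝ) (ha : a ∈ Set.Ioo (0:ℝ) 1) :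
    ∃ C > (0:ℝ), ∀ ε > (0:ℝ), ∀ T > (0:ℝ), ∀ v Z : ℝ → ℝ → ℝ,
      Continuous (Function.uncurry v) →
      Continuous (Function.uncurry Z) →
      (∀ t x, v t (x + 2) = v t x) →
      (∀ t x, Z t (x + 2) = Z t x) →
      (∀ t, ContDiff ℝ 2 (v t)) →
      (∀ x, v 0 x = 0) →
      (∀ t ∈ Set.Icc (0:ℝ) T, ∀ x : ℝ,
        HasDerivAt (fun τ => v τ x)
          (ε * iteratedDeriv 2 (v t) x - ε * (v t x + Z t x) ^ 3) t) →
      ∀ t ∈ Set.Icc (0:ℝ) T,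
        (1 / (2 * (p:ℝ))) * (∫ x in (0:ℝ)..2, v t x ^ (2*p))
            + ε * (1 - a) * ∫ s in (0:ℝ)..t, ∫ x in (0:ℝ)..2, v s x ^ (2*p+2)
          ≤ ε * C * ∫ s in (0:ℝ)..t,
              (sSup (Set.range fun x => |Z s x|)) ^ (2*p+2) := by
  obtain ⟨C, hC, habs⟩ := exists_cube_absorption ha.1 ha.2.le hp
  refine ⟨2 * C, by positivity, fun ε hε T _ v Z hv hZ hvper hZper _ hv0 hpde t ht => ?_⟩
  show _ ≤ ε * (2 * C) * ∫ s in (0:ℝ)..t, supNorm (Z s) ^ (2 * p + 2)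
  have hsup := supNorm_energy_le hp hε.le habs two_ne_zero hv hZ hvper hZper hv0 hpde ht
  have hbound : ∀ s x, |v s x| ≤ supNorm (v s) := fun s =>
    Periodic.abs_le_supNorm (hvper s) two_ne_zero (hv.comp (Continuous.prodMk_right s))
  have hspace : ∀ s k, ∫ x in (0:ℝ)..2, v s x ^ k ≤ 2 * supNorm (v s) ^ k := fun s k => by
    simpa using intervalIntegral_pow_le zero_le_two (hbound s) k
  have hspacetime : ∫ s in (0:ℝ)..t, ∫ x in (0:ℝ)..2, v s x ^ (2 * p + 2)
      ≤ 2 * ∫ s in (0:ℝ)..t, supNorm (v s) ^ (2 * p + 2) := by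
    rw [← intervalIntegral.integral_const_mul]
    refine intervalIntegral.integral_mono_on ht.1 ?_ ?_ fun s _ => hspace s _
    · exact (intervalIntegral.continuous_parametric_intervalIntegral_of_continuous'
        (f := fun s x => v s x ^ (2 * p + 2)) (hv.pow _) 0 2).intervalIntegrable _ _
    · exact ((continuous_supNorm two_ne_zero hv hvper).pow _).const_mul _ |>.intervalIntegrable _ _
  have hεa : 0 ≤ ε * (1 - a) := mul_nonneg hε.le (sub_nonneg.2 ha.2.le)
  calc _ ≤ 1 / (2 * (p:ℝ)) * (2 * supNorm (v t) ^ (2 * p))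
        + ε * (1 - a) * (2 * ∫ s in (0:ℝ)..t, supNorm (v s) ^ (2 * p + 2)) := by
        gcongr
        exact hspace t _
    _ ≤ _ := by linarith
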